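/- Let n be an even positive integer and let p ∈ [0,1]^n. If x is sampled from the univariate model with frequency vector p, then the probability that x is an optimum of EqualBlocksOneMax is at most exp( − Σ_{i=1}^{n} p_i · (1 − p_i) ). -/

import Mathlib

/-- The probability that the univariate model with frequency vector `p` samples
exactly the bit string `x` (bits are independent, bit `i` is `true` with
probability `p i`). -/
noncomputable def univMass {n : ℕ} (p : Fin n → ℝ) (x : Fin n → Bool) : ℝ :=
  ∏ i, if x i then p i else 1 - p i

open scoped Classical in
/-- The probability that a sample from the univariate model with frequency
vector `p` satisfies the predicate `A`. -/
noncomputable def univPr {n : ℕ} (p : Fin n → ℝ) (A : (Fin n → Bool) → Prop) : ℝ :=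
  ∑ x : Fin n → Bool, if A x then univMass p x else 0

/-- `x` is an optimum of EqualBlocksOneMax on bit strings of length `2 * m`:
every block (pair of positions `2j` and `2j+1`, zero-based) has two equal bits. -/
def IsEBOMOptimum (m : ℕ) (x : Fin (2 * m) → Bool) : Prop :=
  ∀ j : Fin m,
    x ⟨2 * j.1, by have := j.2; omega⟩ = x ⟨2 * j.1 + 1, by have := j.2; omega⟩

/-!
The optimality event is the conjunction of the events "block `j` has equal bits", which involve
disjoint sets of positions and are therefore independent under the univariate model. Block `j`
is equal with probability `ab + (1-a)(1-b) = 1 - (a(1-a) + b(1-b)) - (a-b)²` for its frequencies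
`a, b`, which is at most `exp (-(a(1-a) + b(1-b)))` by `1 + t ≤ exp t`; multiply over blocks.
-/

open Finset

section UnivariateModel

variable {n : ℕ}

lemma univPr_nonneg {p : Fin n → ℝ} (hp : ∀ i, p i ∈ Set.Icc (0 : ℝ) 1)
    (A : (Fin n → Bool) → Prop) : 0 ≤ univPr p A := by
  refine sum_nonneg fun x _ => ?_
  split_ifs
  · refine prod_nonneg fun i _ => ?_
    have := hp i
    split_ifs <;> simp only [Set.mem_Icc] at this <;> linarith
  · exact le_rfl

lemma univPr_forall_blocks {ι : Type*} [Fintype ι] [DecidableEq ι] {k : ℕ}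
    (e : ι × Fin k ≃ Fin n) (p : Fin n → ℝ) (A : ι → (Fin k → Bool) → Prop) :
    univPr p (fun x => ∀ j, A j fun l => x (e (j, l)))
      = ∏ j, univPr (fun l => p (e (j, l))) (A j) := by
  classical
  let E : (ι → Fin k → Bool) ≃ (Fin n → Bool) :=
    (Equiv.curry _ _ _).symm.trans (Equiv.arrowCongr e (Equiv.refl _))
  have hE : ∀ y j l, E y (e (j, l)) = y j l := by simp [E]
  have hmass : ∀ y, univMass p (E y) = ∏ j, univMass (fun l => p (e (j, l))) (y j) := by
    intro y
    simp only [univMass, ← e.prod_comp, Fintype.prod_prod_type, hE]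
  simp only [univPr, Fintype.prod_sum, Fintype.prod_ite_zero, ← E.sum_comp, hE, hmass]

end UnivariateModel

lemma univPr_fin_two_eq (q : Fin 2 → ℝ) :
    univPr q (fun z => z 0 = z 1) = q 0 * q 1 + (1 - q 0) * (1 - q 1) := by
  simp [univPr, univMass, ← (finTwoArrowEquiv Bool).symm.sum_comp, Fintype.sum_prod_type]

lemma mul_add_one_sub_mul_one_sub_le_exp (a b : ℝ) :
    a * b + (1 - a) * (1 - b) ≤ Real.exp (-(a * (1 - a) + b * (1 - b))) := by
  have := Real.add_one_le_exp (-(a * (1 - a) + b * (1 - b)))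
  nlinarith [sq_nonneg (a - b)]

def blockEquiv (m : ℕ) : Fin m × Fin 2 ≃ Fin (2 * m) :=
  finProdFinEquiv.trans (finCongr (mul_comm m 2))

lemma isEBOMOptimum_iff {m : ℕ} (x : Fin (2 * m) → Bool) :
    IsEBOMOptimum m x ↔ ∀ j, x (blockEquiv m (j, 0)) = x (blockEquiv m (j, 1)) := by
  refine forall_congr' fun j => ?_
  have h0 : blockEquiv m (j, 0) = ⟨2 * j, by have := j.2; omega⟩ :=
    Fin.ext (by simp [blockEquiv])
  have h1 : blockEquiv m (j, 1) = ⟨2 * j + 1, by have := j.2; omega⟩ :=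
    Fin.ext (by simp [blockEquiv, add_comm])
  rw [h0, h1]

theorem univPr_optimum_le_exp_sum_p_general
    (m : ℕ)
    (p : Fin (2 * m) → ℝ) (hp : ∀ i, p i ∈ Set.Icc (0 : ℝ) 1) :
    univPr p (IsEBOMOptimum m) ≤ Real.exp (-∑ i, p i * (1 - p i)) := by
  set e := blockEquiv m
  calc univPr p (IsEBOMOptimum m)
      = ∏ j, univPr (fun l => p (e (j, l))) (fun z => z 0 = z 1) := by
        rw [← univPr_forall_blocks]
        simp only [funext fun x => propext (isEBOMOptimum_iff x), e]
    _ ≤ ∏ j, Real.exp (-∑ l, p (e (j, l)) * (1 - p (e (j, l)))) := by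
        refine prod_le_prod (fun j _ => univPr_nonneg (fun l => hp _) _) fun j _ => ?_
        rw [univPr_fin_two_eq, Fin.sum_univ_two]
        exact mul_add_one_sub_mul_one_sub_le_exp _ _
    _ = Real.exp (-∑ i, p i * (1 - p i)) := by
        rw [← Real.exp_sum, sum_neg_distrib, ← e.sum_comp (fun i => p i * (1 - p i)),
          Fintype.sum_prod_type]

theorem univPr_optimum_le_exp_sum_p
    (m : ℕ) (hm : 0 < m)
    (p : Fin (2 * m) → ℝ) (hp : ∀ i, p i ∈ Set.Icc (0 : ℝ) 1) :
    univPr p (IsEBOMOptimum m) ≤ Real.exp (-∑ i, p i * (1 - p i)) :=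
  univPr_optimum_le_exp_sum_p_general m p hp
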